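/- arXiv:1701.03974 — 4 statements merged into one kernel-verified Lean document; each statement's English description precedes it below -/
import Mathlib

section
/- Theorem 1 (dual-variable bound): Under the MOSP setting with ε > V̄ and λ_1 = 0, every dual iterate satisfies ‖λ_t‖ ≤ μ·M + (2·G·R + R²/(2α) + μ·M²/2)/(ε − V̄) for all t ∈ {1, …, T+1}. -/
/-!
Comparing the proximal step with the Slater point `x̃` gives the drift bound
`⟪λ_t, g_t(x_t)⟫ ≤ 2GR + R²/(2α) - (ε - V̄)‖λ_t‖`. Expanding `‖λ_t + μ g_t(x_t)‖²` then shows that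
the update does not increase the norm once `‖λ_t‖` exceeds
`B = (2GR + R²/(2α) + μM²/2)/(ε - V̄)`, while below `B` one step adds at most `μM`; the positive
projection only shrinks norms. So `‖λ_t‖ ≤ μM + B` persists from `λ_1 = 0`.
-/

open scoped RealInnerProductSpace
open Finset

noncomputable def posProj {m : ℕ} (v : EuclideanSpace ℝ (Fin m)) :
    EuclideanSpace ℝ (Fin m) := WithLp.toLp 2 (fun i => max (v i) 0)

section Drift

variable {E : Type*} [NormedAddCommGroup E] [InnerProductSpace ℝ E]

theorem norm_add_smul_le_of_inner_le {lam u : E} {μ M C D : ℝ} (hμ : 0 ≤ μ) (hD : 0 < D)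
    (hu : ‖u‖ ≤ M) (hinner : ⟪lam, u⟫ ≤ C - D * ‖lam‖)
    (hlam : ‖lam‖ ≤ μ * M + (C + μ * M ^ 2 / 2) / D) :
    ‖lam + μ • u‖ ≤ μ * M + (C + μ * M ^ 2 / 2) / D := by
  set B := (C + μ * M ^ 2 / 2) / D
  have hnorm_smul : ‖μ • u‖ ≤ μ * M := by
    rw [norm_smul, Real.norm_of_nonneg hμ]
    exact mul_le_mul_of_nonneg_left hu hμ
  by_cases hsmall : ‖lam‖ ≤ B
  · linarith [norm_add_le lam (μ • u)]
  · have hDB : D * B = C + μ * M ^ 2 / 2 := mul_div_cancel₀ _ hD.ne'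
    have hdrift : D * B ≤ D * ‖lam‖ := mul_le_mul_of_nonneg_left (by linarith) hD.le
    have hu_sq : ‖u‖ ^ 2 ≤ M ^ 2 := pow_le_pow_left₀ (norm_nonneg u) hu 2
    have hsq : ‖lam + μ • u‖ ^ 2 ≤ ‖lam‖ ^ 2 := by
      rw [norm_add_sq_real, real_inner_smul_right, norm_smul, Real.norm_of_nonneg hμ]
      have hdecrease : 2 * ⟪lam, u⟫ + μ * ‖u‖ ^ 2 ≤ 0 := by nlinarith
      nlinarith
    have hle := (pow_le_pow_iff_left₀ (norm_nonneg _) (norm_nonneg _) two_ne_zero).mp hsq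
    linarith

theorem norm_le_of_drift {lam u : ℕ → E} {μ M C D : ℝ} (hμ : 0 ≤ μ) (hD : 0 < D)
    (hlam1 : lam 1 = 0) (hu : ∀ t, 1 ≤ t → ‖u t‖ ≤ M)
    (hinner : ∀ t, 1 ≤ t → ⟪lam t, u t⟫ ≤ C - D * ‖lam t‖)
    (hstep : ∀ t, 1 ≤ t → ‖lam (t + 1)‖ ≤ ‖lam t + μ • u t‖) :
    ∀ t, 1 ≤ t → ‖lam t‖ ≤ μ * M + (C + μ * M ^ 2 / 2) / D := by
  intro t ht
  induction t, ht using Nat.le_induction with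
  | base =>
    have hM : 0 ≤ M := (norm_nonneg _).trans (hu 1 le_rfl)
    have hC : 0 ≤ C := by simpa [hlam1] using hinner 1 le_rfl
    rw [hlam1, norm_zero]
    positivity
  | succ t ht ih =>
    exact (hstep t ht).trans (norm_add_smul_le_of_inner_le hμ hD (hu t ht) (hinner t ht) ih)

end Drift

theorem inner_le_of_prox_le {E F : Type*} [NormedAddCommGroup E] [InnerProductSpace ℝ E]
    [NormedAddCommGroup F] [InnerProductSpace ℝ F] {d xprev xnew z : E} {lam v w : F}
    {G R α ε : ℝ}
    (hopt : ⟪d, xnew - xprev⟫ + ⟪lam, v⟫ + ‖xnew - xprev‖ ^ 2 / (2 * α) ≤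
      ⟪d, z - xprev⟫ + ⟪lam, w⟫ + ‖z - xprev‖ ^ 2 / (2 * α))
    (hd : ‖d‖ ≤ G) (hnew : ‖xnew - xprev‖ ≤ R) (hz : ‖z - xprev‖ ≤ R) (hα : 0 ≤ α)
    (hw : ⟪lam, w⟫ ≤ -ε * ‖lam‖) :
    ⟪lam, v⟫ ≤ 2 * G * R + R ^ 2 / (2 * α) - ε * ‖lam‖ := by
  have hlinear : ∀ y : E, ‖y‖ ≤ R → |⟪d, y⟫| ≤ G * R := fun y hy =>
    (abs_real_inner_le_norm d y).trans
      (mul_le_mul hd hy (norm_nonneg y) ((norm_nonneg d).trans hd))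
  have hquad : ‖z - xprev‖ ^ 2 / (2 * α) ≤ R ^ 2 / (2 * α) := by gcongr
  have hnew_sq : 0 ≤ ‖xnew - xprev‖ ^ 2 / (2 * α) := by positivity
  linarith [abs_le.mp (hlinear _ hnew), abs_le.mp (hlinear _ hz)]

section Nonneg

variable {ι : Type*} [Fintype ι]

theorem EuclideanSpace.norm_le_sum_of_nonneg {w : EuclideanSpace ℝ ι} (hw : ∀ i, 0 ≤ w i) :
    ‖w‖ ≤ ∑ i, w i := by
  have hsq : ‖w‖ ^ 2 ≤ (∑ i, w i) ^ 2 := by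
    rw [EuclideanSpace.real_norm_sq_eq]
    exact sum_sq_le_sq_sum_of_nonneg fun i _ => hw i
  exact (pow_le_pow_iff_left₀ (norm_nonneg _) (sum_nonneg fun i _ => hw i) two_ne_zero).mp hsq

theorem EuclideanSpace.inner_le_neg_mul_norm_of_nonneg {w v : EuclideanSpace ℝ ι} {ε : ℝ}
    (hw : ∀ i, 0 ≤ w i) (hv : ∀ i, v i ≤ -ε) (hε : 0 ≤ ε) : ⟪w, v⟫ ≤ -ε * ‖w‖ := by
  calc ⟪w, v⟫ = ∑ i, w i * v i := by simp [PiLp.inner_apply, mul_comm]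
    _ ≤ ∑ i, w i * -ε := sum_le_sum fun i _ => mul_le_mul_of_nonneg_left (hv i) (hw i)
    _ = -ε * ∑ i, w i := by rw [mul_sum]; simp only [mul_comm]
    _ ≤ -ε * ‖w‖ :=
      mul_le_mul_of_nonpos_left (norm_le_sum_of_nonneg hw) (neg_nonpos.mpr hε)

end Nonneg

section PosProj

variable {m : ℕ}

theorem posProj_apply (v : EuclideanSpace ℝ (Fin m)) (i : Fin m) :
    posProj v i = max (v i) 0 := rfl

theorem posProj_apply_nonneg (v : EuclideanSpace ℝ (Fin m)) (i : Fin m) : 0 ≤ posProj v i :=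
  le_max_right _ _

theorem norm_posProj_le (v : EuclideanSpace ℝ (Fin m)) : ‖posProj v‖ ≤ ‖v‖ := by
  rw [EuclideanSpace.norm_eq, EuclideanSpace.norm_eq]
  gcongr with i
  rw [posProj_apply, Real.norm_eq_abs, Real.norm_eq_abs]
  exact abs_max_le_max_abs_abs.trans (by simp)

theorem inner_le_inner_add_mul_of_nonneg {w a b : EuclideanSpace ℝ (Fin m)} {V : ℝ}
    (hw : ∀ i, 0 ≤ w i) (hab : ‖posProj (a - b)‖ ≤ V) : ⟪w, a⟫ ≤ ⟪w, b⟫ + V * ‖w‖ := by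
  have hpos : ⟪w, a - b⟫ ≤ ⟪w, posProj (a - b)⟫ := by
    simp only [PiLp.inner_apply, RCLike.inner_apply, conj_trivial, posProj_apply]
    exact sum_le_sum fun i _ => mul_le_mul_of_nonneg_right (le_max_left _ _) (hw i)
  have hcs := (real_inner_le_norm w (posProj (a - b))).trans
    (mul_le_mul_of_nonneg_left hab (norm_nonneg w))
  rw [inner_sub_right] at hpos
  linarith

end PosProj

theorem mosp_dual_variable_bound_general {n m : ℕ}
    (T : ℕ)
    (X : Set (EuclideanSpace ℝ (Fin n)))
    (R G M ε Vbar α μ : ℝ)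
    (hR : ∀ x ∈ X, ∀ y ∈ X, ‖x - y‖ ≤ R)
    (f : ℕ → EuclideanSpace ℝ (Fin n) → ℝ)
    (hG : ∀ t, ∀ x ∈ X, ‖gradient (f t) x‖ ≤ G)
    (g : ℕ → EuclideanSpace ℝ (Fin n) → EuclideanSpace ℝ (Fin m))
    (hM : ∀ t, ∀ x ∈ X, ‖g t x‖ ≤ M)
    (hSlater : ∃ xt ∈ X, ∀ t, ∀ i, g t xt i ≤ -ε)
    (hvar : ∀ t, ∀ x ∈ X, ‖posProj (g (t + 1) x - g t x)‖ ≤ Vbar)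
    (hεV : Vbar < ε)
    (hα : 0 < α) (hμ : 0 < μ)
    (x : ℕ → EuclideanSpace ℝ (Fin n))
    (lam : ℕ → EuclideanSpace ℝ (Fin m))
    (hx0 : x 0 ∈ X) (hlam1 : lam 1 = 0)
    (hprimal : ∀ t, 1 ≤ t → x t ∈ X ∧ ∀ z ∈ X,
      ⟪gradient (f (t - 1)) (x (t - 1)), x t - x (t - 1)⟫ + ⟪lam t, g (t - 1) (x t)⟫ +
          ‖x t - x (t - 1)‖ ^ 2 / (2 * α) ≤
        ⟪gradient (f (t - 1)) (x (t - 1)), z - x (t - 1)⟫ + ⟪lam t, g (t - 1) z⟫ +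
          ‖z - x (t - 1)‖ ^ 2 / (2 * α))
    (hdual : ∀ t, 1 ≤ t → lam (t + 1) = posProj (lam t + μ • g t (x t))) :
    ∀ t, 1 ≤ t → t ≤ T + 1 →
      ‖lam t‖ ≤ μ * M + (2 * G * R + R ^ 2 / (2 * α) + μ * M ^ 2 / 2) / (ε - Vbar) := by
  obtain ⟨xs, hxs, hslater⟩ := hSlater
  have hVbar : 0 ≤ Vbar := (norm_nonneg _).trans (hvar 0 _ hx0)
  have hxX : ∀ t, x t ∈ X := fun t =>
    t.eq_zero_or_pos.elim (fun h => h ▸ hx0) fun h => (hprimal t h).1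
  have hlam_nonneg : ∀ t, 1 ≤ t → ∀ i, 0 ≤ lam t i := by
    intro t ht
    induction t, ht using Nat.le_induction with
    | base => simp [hlam1]
    | succ t ht _ => rw [hdual t ht]; exact posProj_apply_nonneg _
  have hdrift : ∀ t, 1 ≤ t →
      ⟪lam t, g t (x t)⟫ ≤ 2 * G * R + R ^ 2 / (2 * α) - (ε - Vbar) * ‖lam t‖ := by
    intro t ht
    have hslater_inner := EuclideanSpace.inner_le_neg_mul_norm_of_nonneg (hlam_nonneg t ht)
      (hslater (t - 1)) (hVbar.trans hεV.le)
    have hprox := inner_le_of_prox_le ((hprimal t ht).2 xs hxs) (hG _ _ (hxX _))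
      (hR _ (hxX t) _ (hxX _)) (hR _ hxs _ (hxX _)) hα.le hslater_inner
    have hvar_t := hvar (t - 1) (x t) (hxX t)
    rw [Nat.sub_add_cancel ht] at hvar_t
    linarith [inner_le_inner_add_mul_of_nonneg (hlam_nonneg t ht) hvar_t]
  intro t ht _
  exact norm_le_of_drift hμ.le (by linarith) hlam1 (fun t _ => hM t _ (hxX t)) hdrift
    (fun t ht => hdual t ht ▸ norm_posProj_le _) t ht

/-- Theorem 1 (dual-variable bound) for the MOSP recursion. -/
theorem mosp_dual_variable_bound {n m : ℕ} (hm : 0 < m)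
    (T : ℕ) (hT : 1 ≤ T)
    (X : Set (EuclideanSpace ℝ (Fin n))) (hXne : X.Nonempty) (hXconv : Convex ℝ X)
    (R G M ε Vbar α μ : ℝ)
    (hR : ∀ x ∈ X, ∀ y ∈ X, ‖x - y‖ ≤ R)
    (f : ℕ → EuclideanSpace ℝ (Fin n) → ℝ)
    (hfconv : ∀ t, ConvexOn ℝ Set.univ (f t))
    (hfdiff : ∀ t, Differentiable ℝ (f t))
    (hG : ∀ t, ∀ x ∈ X, ‖gradient (f t) x‖ ≤ G)
    (g : ℕ → EuclideanSpace ℝ (Fin n) → EuclideanSpace ℝ (Fin m))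
    (hgconv : ∀ t i, ConvexOn ℝ Set.univ fun x => g t x i)
    (hM : ∀ t, ∀ x ∈ X, ‖g t x‖ ≤ M)
    (hε : 0 < ε)
    (hSlater : ∃ xt ∈ X, ∀ t, ∀ i, g t xt i ≤ -ε)
    (hVbar : 0 ≤ Vbar)
    (hvar : ∀ t, ∀ x ∈ X, ‖posProj (g (t + 1) x - g t x)‖ ≤ Vbar)
    (hεV : Vbar < ε)
    (hα : 0 < α) (hμ : 0 < μ)
    (x : ℕ → EuclideanSpace ℝ (Fin n))
    (lam : ℕ → EuclideanSpace ℝ (Fin m))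
    (hx0 : x 0 ∈ X) (hlam1 : lam 1 = 0)
    (hprimal : ∀ t, 1 ≤ t → x t ∈ X ∧ ∀ z ∈ X,
      ⟪gradient (f (t - 1)) (x (t - 1)), x t - x (t - 1)⟫ + ⟪lam t, g (t - 1) (x t)⟫ +
          ‖x t - x (t - 1)‖ ^ 2 / (2 * α) ≤
        ⟪gradient (f (t - 1)) (x (t - 1)), z - x (t - 1)⟫ + ⟪lam t, g (t - 1) z⟫ +
          ‖z - x (t - 1)‖ ^ 2 / (2 * α))
    (hdual : ∀ t, 1 ≤ t → lam (t + 1) = posProj (lam t + μ • g t (x t))) :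
    ∀ t, 1 ≤ t → t ≤ T + 1 →
      ‖lam t‖ ≤ μ * M + (2 * G * R + R ^ 2 / (2 * α) + μ * M ^ 2 / 2) / (ε - Vbar) :=
  mosp_dual_variable_bound_general T X R G M ε Vbar α μ hR f hG g hM hSlater hvar hεV hα hμ x lam
    hx0 hlam1 hprimal hdual
end

section
/- Proposition 1 (dual form): Let Λ := {λ ∈ ℝ^m : λ ≥ 0}, let T ≥ 1, and let D_1, …, D_T : Λ → ℝ. Suppose each D_t attains its maximum over Λ at some λ_t^* ∈ Λ, and the sum Σ_{t=1}^T D_t attains its maximum over Λ at some λ^* ∈ Λ. Let v_1, …, v_{T−1} ≥ 0 satisfy |D_{t+1}(λ) − D_t(λ)| ≤ v_t for all λ ∈ Λ and all t ∈ {1, …, T−1}, and set V := Σ_{t=1}^{T−1} v_t. Then Σ_{t=1}^T D_t(λ_t^*) − Σ_{t=1}^T D_t(λ^*) ≤ 2·T·V. -/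
open Finset

/-- Proposition 1 (dual form): the aggregate loss of the per-slot dual maximizers
relative to the overall dual maximizer is at most `2·T·V`, where `V` is the
accumulated variation of the dual functions. -/
theorem prop1_dual_form {m : ℕ} (hm : 0 < m) (T : ℕ) (hT : 1 ≤ T)
    (D : ℕ → EuclideanSpace ℝ (Fin m) → ℝ)
    (lamstar : ℕ → EuclideanSpace ℝ (Fin m))
    (hposstar : ∀ t, ∀ i, 0 ≤ lamstar t i)
    (hmax : ∀ t, 1 ≤ t → t ≤ T →
      ∀ lam : EuclideanSpace ℝ (Fin m), (∀ i, 0 ≤ lam i) → D t lam ≤ D t (lamstar t))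
    (lamS : EuclideanSpace ℝ (Fin m)) (hposS : ∀ i, 0 ≤ lamS i)
    (hmaxS : ∀ lam : EuclideanSpace ℝ (Fin m), (∀ i, 0 ≤ lam i) →
      ∑ t ∈ Icc 1 T, D t lam ≤ ∑ t ∈ Icc 1 T, D t lamS)
    (v : ℕ → ℝ) (hv : ∀ t, 1 ≤ t → t ≤ T - 1 → 0 ≤ v t)
    (hvar : ∀ t, 1 ≤ t → t ≤ T - 1 →
      ∀ lam : EuclideanSpace ℝ (Fin m), (∀ i, 0 ≤ lam i) →
        |D (t + 1) lam - D t lam| ≤ v t) :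
    ∑ t ∈ Icc 1 T, D t (lamstar t) - ∑ t ∈ Icc 1 T, D t lamS ≤
      2 * T * ∑ t ∈ Icc 1 (T - 1), v t := by
  set V := ∑ r ∈ Icc 1 (T - 1), v r with hV
  have hVnn : 0 ≤ V :=
    Finset.sum_nonneg fun r hr => hv r (mem_Icc.mp hr).1 (mem_Icc.mp hr).2
  -- partial telescoping bound
  have chainP : ∀ (lam : EuclideanSpace ℝ (Fin m)), (∀ i, 0 ≤ lam i) →
      ∀ s, 1 ≤ s → ∀ t, s ≤ t → t ≤ T →
      |D t lam - D s lam| ≤ ∑ r ∈ Icc s (t - 1), v r := by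
    intro lam hlam s hs t hst
    induction t, hst using Nat.le_induction with
    | base =>
        intro _
        rw [Finset.Icc_eq_empty (by omega)]
        simp
    | succ t ht ih =>
        intro htT
        have htT' : t ≤ T := le_trans (Nat.le_succ t) htT
        have ih' := ih htT'
        have hvt : |D (t + 1) lam - D t lam| ≤ v t :=
          hvar t (le_trans hs ht) (Nat.le_sub_one_of_lt htT) lam hlam
        have h1 : t - 1 + 1 = t := by omega
        have hsum : ∑ r ∈ Icc s (t + 1 - 1), v r = ∑ r ∈ Icc s (t - 1), v r + v t := by
          rw [show t + 1 - 1 = t from rfl, ← h1, Finset.sum_Icc_succ_top (by omega), h1]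
        calc |D (t + 1) lam - D s lam|
            ≤ |D (t + 1) lam - D t lam| + |D t lam - D s lam| := abs_sub_le _ _ _
          _ ≤ v t + ∑ r ∈ Icc s (t - 1), v r := add_le_add hvt ih'
          _ = ∑ r ∈ Icc s (t + 1 - 1), v r := by rw [hsum]; ring
  -- global variation bound
  have chain : ∀ (lam : EuclideanSpace ℝ (Fin m)), (∀ i, 0 ≤ lam i) →
      ∀ s t, 1 ≤ s → s ≤ T → 1 ≤ t → t ≤ T → |D t lam - D s lam| ≤ V := by
    intro lam hlam s t hs hsT ht htT
    have sub : ∀ a b, 1 ≤ a → b ≤ T → Icc a (b - 1) ⊆ Icc 1 (T - 1) :=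
      fun a b ha hb => Finset.Icc_subset_Icc ha (by omega)
    have bnd : ∀ (E : Finset ℕ), E ⊆ Icc 1 (T - 1) → ∑ r ∈ E, v r ≤ V := by
      intro E hE
      exact Finset.sum_le_sum_of_subset_of_nonneg hE
        (fun r hr _ => hv r (mem_Icc.mp hr).1 (mem_Icc.mp hr).2)
    rcases le_total s t with h | h
    · exact le_trans (chainP lam hlam s hs t h htT) (bnd _ (sub s t hs htT))
    · rw [abs_sub_comm]
      exact le_trans (chainP lam hlam t ht s h hsT) (bnd _ (sub t s ht hsT))
  have cardT : ((Icc 1 T).card : ℝ) = (T : ℝ) := by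
    rw [Nat.card_Icc]; simp
  -- per-slot bound
  have per : ∀ t ∈ Icc 1 T, D t (lamstar t) - D t lamS ≤ 2 * V := by
    intro t htm
    obtain ⟨ht1, htT⟩ := mem_Icc.mp htm
    have h1 : (T : ℝ) * D t (lamstar t) ≤ (∑ s ∈ Icc 1 T, D s (lamstar t)) + T * V := by
      have : ∑ s ∈ Icc 1 T, D t (lamstar t) ≤ ∑ s ∈ Icc 1 T, (D s (lamstar t) + V) := by
        refine Finset.sum_le_sum fun s hsm => ?_
        obtain ⟨hs1, hsT⟩ := mem_Icc.mp hsm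
        have := chain (lamstar t) (hposstar t) s t hs1 hsT ht1 htT
        have := abs_le.mp this
        linarith [this.2]
      rw [Finset.sum_const, Finset.sum_add_distrib, Finset.sum_const] at this
      simp only [nsmul_eq_mul] at this
      rw [cardT] at this
      linarith
    have h2 : ∑ s ∈ Icc 1 T, D s (lamstar t) ≤ ∑ s ∈ Icc 1 T, D s lamS :=
      hmaxS (lamstar t) (hposstar t)
    have h3 : ∑ s ∈ Icc 1 T, D s lamS ≤ (T : ℝ) * D t lamS + T * V := by
      have : ∑ s ∈ Icc 1 T, D s lamS ≤ ∑ s ∈ Icc 1 T, (D t lamS + V) := by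
        refine Finset.sum_le_sum fun s hsm => ?_
        obtain ⟨hs1, hsT⟩ := mem_Icc.mp hsm
        have := chain lamS hposS t s ht1 htT hs1 hsT
        have := abs_le.mp this
        linarith [this.2]
      rw [Finset.sum_const] at this
      simp only [nsmul_eq_mul] at this
      rw [cardT] at this
      linarith
    have hTpos : (0 : ℝ) < T := by exact_mod_cast Nat.lt_of_lt_of_le Nat.zero_lt_one hT
    nlinarith [h1, h2, h3]
  -- sum up
  have : ∑ t ∈ Icc 1 T, (D t (lamstar t) - D t lamS) ≤ ∑ t ∈ Icc 1 T, (2 * V) :=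
    Finset.sum_le_sum per
  rw [Finset.sum_sub_distrib, Finset.sum_const] at this
  simp only [nsmul_eq_mul] at this
  rw [cardT] at this
  linarith
end

section
/- Let 𝒳 ⊆ ℝ^n be a nonempty convex set with ‖x − y‖ ≤ R for all x, y ∈ 𝒳, let α > 0, ε > 0, G ≥ 0, let d ∈ ℝ^n with ‖d‖ ≤ G, let λ ∈ ℝ^m with λ ≥ 0, let g : ℝ^n → ℝ^m have convex components, and suppose there is x̃ ∈ 𝒳 with g(x̃) ≤ −ε·1 entrywise. Let x₀ ∈ 𝒳 and let x⁺ be a minimizer over x ∈ 𝒳 of the function ⟨d, x − x₀⟩ + ⟨λ, g(x)⟩ + ‖x − x₀‖²/(2α). Then ⟨λ, g(x⁺)⟩ ≤ 2·G·R − ε·‖λ‖ + R²/(2α). -/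
open scoped RealInnerProductSpace

/-- Bound on the Lagrangian cross term at the MOSP primal minimizer
(inequality (13) in the proof of Theorem 1). -/
theorem cross_term_bound {n m : ℕ} (hm : 0 < m)
    (X : Set (EuclideanSpace ℝ (Fin n))) (hXne : X.Nonempty) (hXconv : Convex ℝ X)
    (R α ε G : ℝ) (hα : 0 < α) (hε : 0 < ε) (hG : 0 ≤ G)
    (hR : ∀ x ∈ X, ∀ y ∈ X, ‖x - y‖ ≤ R)
    (d : EuclideanSpace ℝ (Fin n)) (hd : ‖d‖ ≤ G)
    (lam : EuclideanSpace ℝ (Fin m)) (hlam : ∀ i, 0 ≤ lam i)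
    (g : EuclideanSpace ℝ (Fin n) → EuclideanSpace ℝ (Fin m))
    (hgconv : ∀ i, ConvexOn ℝ Set.univ fun x => g x i)
    (hSlater : ∃ xt ∈ X, ∀ i, g xt i ≤ -ε)
    (x₀ : EuclideanSpace ℝ (Fin n)) (hx₀ : x₀ ∈ X)
    (xp : EuclideanSpace ℝ (Fin n)) (hxpX : xp ∈ X)
    (hxpmin : ∀ z ∈ X,
      ⟪d, xp - x₀⟫ + ⟪lam, g xp⟫ + ‖xp - x₀‖ ^ 2 / (2 * α) ≤
        ⟪d, z - x₀⟫ + ⟪lam, g z⟫ + ‖z - x₀‖ ^ 2 / (2 * α)) :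
    ⟪lam, g xp⟫ ≤ 2 * G * R - ε * ‖lam‖ + R ^ 2 / (2 * α) := by
  obtain ⟨xt, hxtX, hxt⟩ := hSlater
  have hR0 : 0 ≤ R := le_trans (by simp) (hR x₀ hx₀ x₀ hx₀)
  have key := hxpmin xt hxtX
  -- ‖lam‖ ≤ ∑ lam i
  have hsumsq : ∑ i, (lam i) ^ 2 ≤ (∑ i, lam i) ^ 2 :=
    Finset.sum_sq_le_sq_sum_of_nonneg (fun i _ => hlam i)
  have hnorm : ‖lam‖ ≤ ∑ i, lam i := by
    rw [EuclideanSpace.norm_eq]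
    calc Real.sqrt (∑ i, ‖lam i‖ ^ 2) ≤ Real.sqrt ((∑ i, lam i) ^ 2) := by
          apply Real.sqrt_le_sqrt
          simpa [Real.norm_eq_abs, sq_abs] using hsumsq
      _ = ∑ i, lam i := by
          rw [Real.sqrt_sq (Finset.sum_nonneg fun i _ => hlam i)]
  -- ⟪lam, g xt⟫ ≤ -ε * ‖lam‖
  have hinner_xt : ⟪lam, g xt⟫ ≤ -ε * ‖lam‖ := by
    have h1 : ⟪lam, g xt⟫ ≤ ∑ i, lam i * (-ε) := by
      rw [PiLp.inner_apply]
      apply Finset.sum_le_sum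
      intro i _
      simpa [mul_comm] using mul_le_mul_of_nonneg_left (hxt i) (hlam i)
    calc ⟪lam, g xt⟫ ≤ ∑ i, lam i * (-ε) := h1
      _ = -ε * ∑ i, lam i := by rw [← Finset.sum_mul]; ring
      _ ≤ -ε * ‖lam‖ := by
          apply mul_le_mul_of_nonpos_left hnorm (by linarith)
  have hdxp : -(G * R) ≤ ⟪d, xp - x₀⟫ := by
    have := abs_real_inner_le_norm d (xp - x₀)
    have h2 : ‖d‖ * ‖xp - x₀‖ ≤ G * R :=
      mul_le_mul hd (hR xp hxpX x₀ hx₀) (norm_nonneg _) hG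
    have := abs_le.mp this
    linarith [this.1]
  have hdxt : ⟪d, xt - x₀⟫ ≤ G * R := by
    have := abs_real_inner_le_norm d (xt - x₀)
    have h2 : ‖d‖ * ‖xt - x₀‖ ≤ G * R :=
      mul_le_mul hd (hR xt hxtX x₀ hx₀) (norm_nonneg _) hG
    have := abs_le.mp this
    linarith [this.2]
  have hxt0 : ‖xt - x₀‖ ^ 2 / (2 * α) ≤ R ^ 2 / (2 * α) := by
    gcongr
    · exact hR xt hxtX x₀ hx₀
  have hxp0 : 0 ≤ ‖xp - x₀‖ ^ 2 / (2 * α) := by positivity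
  linarith
end

section
/- Let 𝒳 ⊆ ℝ^n be a nonempty convex set, α > 0, G ≥ 0, let f : ℝ^n → ℝ be convex and differentiable at x₀ ∈ 𝒳 with ‖∇f(x₀)‖ ≤ G, let λ ∈ ℝ^m with λ ≥ 0, let g : ℝ^n → ℝ^m have convex components, let x⁺ minimize ⟨∇f(x₀), x − x₀⟩ + ⟨λ, g(x)⟩ + ‖x − x₀‖²/(2α) over 𝒳, and let x* ∈ 𝒳 satisfy g(x*) ≤ 0. Then f(x₀) + ⟨λ, g(x⁺)⟩ ≤ f(x*) + (‖x* − x₀‖² − ‖x* − x⁺‖²)/(2α) + α·G²/2. -/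
open scoped RealInnerProductSpace

/-! The proximal objective `φ z = ⟪∇f x₀, z - x₀⟫ + ⟪λ, g z⟫ + ‖z - x₀‖² / (2α)` is
`α⁻¹`-strongly convex, so its minimizer `x⁺` over `𝒳` satisfies
`φ x⁺ + ‖x* - x⁺‖² / (2α) ≤ φ x*`. Convexity of `f` bounds `⟪∇f x₀, x* - x₀⟫` by `f x* - f x₀`,
feasibility gives `⟪λ, g x*⟫ ≤ 0`, and Young's inequality bounds
`-⟪∇f x₀, x⁺ - x₀⟫ - ‖x⁺ - x₀‖² / (2α)` by `α G² / 2`; adding these up gives the claim. -/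

section

variable {E : Type*} [NormedAddCommGroup E] [InnerProductSpace ℝ E] {s : Set E} {m : ℝ}

lemma real_inner_le_young {ε : ℝ} (hε : 0 < ε) (u v : E) :
    ⟪u, v⟫ ≤ ε / 2 * ‖u‖ ^ 2 + ε⁻¹ / 2 * ‖v‖ ^ 2 := by
  have hsq : ε / 2 * ‖u‖ ^ 2 + ε⁻¹ / 2 * ‖v‖ ^ 2 - ‖u‖ * ‖v‖ = ε⁻¹ / 2 * (ε * ‖u‖ - ‖v‖) ^ 2 := by
    field_simp
    ring
  have : 0 ≤ ε⁻¹ / 2 * (ε * ‖u‖ - ‖v‖) ^ 2 := by positivity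
  linarith [real_inner_le_norm u v]

lemma ConvexOn.le_sub_of_hasFDerivAt {f : E → ℝ} {f' : E →L[ℝ] ℝ} {x y : E}
    (hf : ConvexOn ℝ s f) (hx : x ∈ s) (hy : y ∈ s) (hf' : HasFDerivAt f f' x) :
    f' (y - x) ≤ f y - f x := by
  have hline : ConvexOn ℝ (AffineMap.lineMap (k := ℝ) x y ⁻¹' s)
      (f ∘ AffineMap.lineMap (k := ℝ) x y) :=
    hf.comp_affineMap _
  have hderiv : HasDerivAt (f ∘ AffineMap.lineMap (k := ℝ) x y) (f' (y - x)) 0 := by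
    refine HasFDerivAt.comp_hasDerivAt _ ?_ AffineMap.hasDerivAt_lineMap
    simpa using hf'
  simpa [slope_def_field] using
    hline.le_slope_of_hasDerivAt (x := 0) (y := 1) (by simpa using hx) (by simpa using hy)
      zero_lt_one hderiv

lemma ConvexOn.inner_gradient_le_sub [CompleteSpace E] {f : E → ℝ} {x y : E}
    (hf : ConvexOn ℝ s f) (hx : x ∈ s) (hy : y ∈ s) (hd : DifferentiableAt ℝ f x) :
    ⟪gradient f x, y - x⟫ ≤ f y - f x := by
  have := hf.le_sub_of_hasFDerivAt hx hy hd.hasFDerivAt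
  rwa [← toDual_gradient, InnerProductSpace.toDual_apply_apply] at this

lemma strongConvexOn_inner_sub_add_mul_norm_sub_sq (hs : Convex ℝ s) (m : ℝ) (v c : E) :
    StrongConvexOn s m fun x => ⟪v, x - c⟫ + m / 2 * ‖x - c‖ ^ 2 := by
  rw [strongConvexOn_iff_convex]
  have haffine : (fun x => ⟪v, x - c⟫ + m / 2 * ‖x - c‖ ^ 2 - m / 2 * ‖x‖ ^ 2) =
      fun x => innerₛₗ ℝ (v - m • c) x + (m / 2 * ‖c‖ ^ 2 - ⟪v, c⟫) := by
    ext x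
    rw [innerₛₗ_apply_apply, norm_sub_sq_real, inner_sub_right, inner_sub_left,
      real_inner_smul_left, real_inner_comm c x]
    ring
  rw [haffine]
  exact ((innerₛₗ ℝ (v - m • c)).convexOn hs).add_const _

lemma StrongConvexOn.add_convexOn {f g : E → ℝ} (hf : StrongConvexOn s m f)
    (hg : ConvexOn ℝ s g) : StrongConvexOn s m (f + g) := by
  have h := hf.add (uniformConvexOn_zero.mpr hg)
  rwa [add_zero] at h

lemma StrongConvexOn.add_mul_norm_sub_sq_le_of_isMinOn {f : E → ℝ} {x y : E}
    (hf : StrongConvexOn s m f) (hmin : IsMinOn f s x) (hx : x ∈ s) (hy : y ∈ s) :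
    f x + m / 2 * ‖y - x‖ ^ 2 ≤ f y := by
  have hcombo : ∀ t ∈ Set.Ioo (0 : ℝ) 1, f x + (1 - t) * (m / 2 * ‖y - x‖ ^ 2) ≤ f y := by
    intro t ⟨ht₀, ht₁⟩
    have ht : 0 ≤ 1 - t := sub_nonneg.mpr ht₁.le
    have hmin_t : f x ≤ f ((1 - t) • x + t • y) :=
      hmin (hf.1 hx hy ht ht₀.le (sub_add_cancel 1 t))
    have hconv := hf.2 hx hy ht ht₀.le (sub_add_cancel 1 t)
    rw [norm_sub_rev] at hconv
    simp only [smul_eq_mul] at hconv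
    have : t * (f x + (1 - t) * (m / 2 * ‖y - x‖ ^ 2)) ≤ t * f y := by linarith
    exact le_of_mul_le_mul_left this ht₀
  have hlim : Filter.Tendsto (fun t : ℝ => f x + (1 - t) * (m / 2 * ‖y - x‖ ^ 2))
      (nhdsWithin 0 (Set.Ioi 0)) (nhds (f x + m / 2 * ‖y - x‖ ^ 2)) := by
    refine tendsto_nhdsWithin_of_tendsto_nhds (Continuous.tendsto' (by fun_prop) 0 _ ?_)
    ring
  refine le_of_tendsto hlim ?_
  filter_upwards [Ioo_mem_nhdsGT (zero_lt_one' ℝ)] using hcombo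

end

section

variable {ι E : Type*} [Fintype ι] [AddCommGroup E] [Module ℝ E]

lemma EuclideanSpace.inner_le_inner_of_nonneg {w u v : EuclideanSpace ℝ ι} (hw : ∀ i, 0 ≤ w i)
    (huv : ∀ i, u i ≤ v i) : ⟪w, u⟫ ≤ ⟪w, v⟫ := by
  simp only [PiLp.inner_apply, RCLike.inner_apply, conj_trivial]
  exact Finset.sum_le_sum fun i _ => mul_le_mul_of_nonneg_right (huv i) (hw i)

lemma convexOn_inner_comp_of_nonneg {s : Set E} (hs : Convex ℝ s) {w : EuclideanSpace ℝ ι}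
    (hw : ∀ i, 0 ≤ w i) {g : E → EuclideanSpace ℝ ι} (hg : ∀ i, ConvexOn ℝ s fun x => g x i) :
    ConvexOn ℝ s fun x => ⟪w, g x⟫ := by
  refine ⟨hs, fun x hx y hy a b ha hb hab => ?_⟩
  calc ⟪w, g (a • x + b • y)⟫ ≤ ⟪w, a • g x + b • g y⟫ :=
        EuclideanSpace.inner_le_inner_of_nonneg hw fun i => by
          simpa using (hg i).2 hx hy ha hb hab
    _ = a • ⟪w, g x⟫ + b • ⟪w, g y⟫ := by
        simp only [inner_add_right, real_inner_smul_right, smul_eq_mul]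

end

theorem per_slot_regret_bound_general {n m : ℕ}
    (X : Set (EuclideanSpace ℝ (Fin n))) (hXconv : Convex ℝ X)
    (α G : ℝ) (hα : 0 < α)
    (f : EuclideanSpace ℝ (Fin n) → ℝ) (hfconv : ConvexOn ℝ Set.univ f)
    (x₀ : EuclideanSpace ℝ (Fin n))
    (hfdiff : DifferentiableAt ℝ f x₀) (hgrad : ‖gradient f x₀‖ ≤ G)
    (lam : EuclideanSpace ℝ (Fin m)) (hlam : ∀ i, 0 ≤ lam i)
    (g : EuclideanSpace ℝ (Fin n) → EuclideanSpace ℝ (Fin m))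
    (hgconv : ∀ i, ConvexOn ℝ Set.univ fun x => g x i)
    (xp : EuclideanSpace ℝ (Fin n)) (hxpX : xp ∈ X)
    (hxpmin : ∀ z ∈ X,
      ⟪gradient f x₀, xp - x₀⟫ + ⟪lam, g xp⟫ + ‖xp - x₀‖ ^ 2 / (2 * α) ≤
        ⟪gradient f x₀, z - x₀⟫ + ⟪lam, g z⟫ + ‖z - x₀‖ ^ 2 / (2 * α))
    (xs : EuclideanSpace ℝ (Fin n)) (hxsX : xs ∈ X) (hxsfeas : ∀ i, g xs i ≤ 0) :
    f x₀ + ⟪lam, g xp⟫ ≤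
      f xs + (‖xs - x₀‖ ^ 2 - ‖xs - xp‖ ^ 2) / (2 * α) + α * G ^ 2 / 2 := by
  set c := gradient f x₀
  have hdiv : ∀ r : ℝ, r / (2 * α) = α⁻¹ / 2 * r := fun r => by ring
  set φ : EuclideanSpace ℝ (Fin n) → ℝ :=
    (fun z => ⟪c, z - x₀⟫ + α⁻¹ / 2 * ‖z - x₀‖ ^ 2) + fun z => ⟪lam, g z⟫ with hφ
  have hobj : StrongConvexOn X α⁻¹ φ :=
    (strongConvexOn_inner_sub_add_mul_norm_sub_sq hXconv _ c x₀).add_convexOn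
      (convexOn_inner_comp_of_nonneg hXconv hlam fun i =>
        (hgconv i).subset (Set.subset_univ X) hXconv)
  have hmin : IsMinOn φ X xp := isMinOn_iff.mpr fun z hz => by
    have := hxpmin z hz
    rw [hdiv, hdiv] at this
    simp only [hφ, Pi.add_apply]
    linarith
  have hprox := hobj.add_mul_norm_sub_sq_le_of_isMinOn hmin hxpX hxsX
  have hsupport := hfconv.inner_gradient_le_sub (Set.mem_univ x₀) (Set.mem_univ xs) hfdiff
  have hfeas : ⟪lam, g xs⟫ ≤ 0 :=
    (EuclideanSpace.inner_le_inner_of_nonneg hlam hxsfeas).trans_eq (inner_zero_right lam)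
  have hyoung := real_inner_le_young hα (-c) (xp - x₀)
  rw [inner_neg_left, norm_neg] at hyoung
  have hgrad_sq : α / 2 * ‖c‖ ^ 2 ≤ α / 2 * G ^ 2 := by gcongr
  simp only [hφ, Pi.add_apply] at hprox
  rw [sub_div, hdiv, hdiv]
  linarith

/-- Per-slot regret bound at a MOSP step (inequality (39) in the proof of Theorem 2). -/
theorem per_slot_regret_bound {n m : ℕ} (hm : 0 < m)
    (X : Set (EuclideanSpace ℝ (Fin n))) (hXne : X.Nonempty) (hXconv : Convex ℝ X)
    (α G : ℝ) (hα : 0 < α) (hG : 0 ≤ G)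
    (f : EuclideanSpace ℝ (Fin n) → ℝ) (hfconv : ConvexOn ℝ Set.univ f)
    (x₀ : EuclideanSpace ℝ (Fin n)) (hx₀ : x₀ ∈ X)
    (hfdiff : DifferentiableAt ℝ f x₀) (hgrad : ‖gradient f x₀‖ ≤ G)
    (lam : EuclideanSpace ℝ (Fin m)) (hlam : ∀ i, 0 ≤ lam i)
    (g : EuclideanSpace ℝ (Fin n) → EuclideanSpace ℝ (Fin m))
    (hgconv : ∀ i, ConvexOn ℝ Set.univ fun x => g x i)
    (xp : EuclideanSpace ℝ (Fin n)) (hxpX : xp ∈ X)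
    (hxpmin : ∀ z ∈ X,
      ⟪gradient f x₀, xp - x₀⟫ + ⟪lam, g xp⟫ + ‖xp - x₀‖ ^ 2 / (2 * α) ≤
        ⟪gradient f x₀, z - x₀⟫ + ⟪lam, g z⟫ + ‖z - x₀‖ ^ 2 / (2 * α))
    (xs : EuclideanSpace ℝ (Fin n)) (hxsX : xs ∈ X) (hxsfeas : ∀ i, g xs i ≤ 0) :
    f x₀ + ⟪lam, g xp⟫ ≤
      f xs + (‖xs - x₀‖ ^ 2 - ‖xs - xp‖ ^ 2) / (2 * α) + α * G ^ 2 / 2 :=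
  per_slot_regret_bound_general X hXconv α G hα f hfconv x₀ hfdiff hgrad lam hlam g hgconv xp hxpX
    hxpmin xs hxsX hxsfeas
end
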